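/- Under the errors-in-variables model with U_1,…,U_K, ε mutually independent and (U_1,…,U_K,ε) independent of X*, assume all of X*_1,…,X*_K, U_1,…,U_K, ε are square-integrable. Fix b ∈ ℝ^K and u ∈ ℝ, and suppose φ_{(X,Y)} is nonzero at the point s(b,u) := (b_1u,…,b_Ku,−u). Then for all indices k_1 ≠ k_2 with 1 ≤ k_1,k_2 ≤ K: Cov(X_{k_1},X_{k_2}) + Λ_{k_1,k_2}[φ_{(X,Y)}](s(b,u)) = Cov(X*_{k_1},X*_{k_2}) + Λ_{k_1,k_2}[φ_{X*}](u(b_1−β_1),…,u(b_K−β_K)). -/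

import Mathlib

open MeasureTheory ProbabilityTheory

/-- Characteristic function of a random vector `Z : Ω → (Fin d → ℝ)`. -/
noncomputable def charF {Ω : Type*} [MeasurableSpace Ω] (μ : Measure Ω) {d : ℕ}
    (Z : Ω → Fin d → ℝ) (s : Fin d → ℝ) : ℂ :=
  ∫ ω, Complex.exp (Complex.I * ((∑ k, s k * Z ω k : ℝ) : ℂ)) ∂μ

/-- Partial derivative of `φ : ℝ^d → ℂ` in the `j`-th coordinate direction. -/
noncomputable def pd {d : ℕ} (j : Fin d) (φ : (Fin d → ℝ) → ℂ) (s : Fin d → ℝ) : ℂ :=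
  fderiv ℝ φ s (Pi.single j 1)

/-- Second-order logarithmic derivative
`Λ_{j,k}[φ](s) = ∂_j∂_kφ(s)/φ(s) − (∂_jφ(s))(∂_kφ(s))/φ(s)²`. -/
noncomputable def Lam {d : ℕ} (j k : Fin d) (φ : (Fin d → ℝ) → ℂ) (s : Fin d → ℝ) : ℂ :=
  pd j (pd k φ) s / φ s - (pd j φ s) * (pd k φ s) / (φ s) ^ 2

/-- Covariance of two real random variables. -/
noncomputable def cov {Ω : Type*} [MeasurableSpace Ω] (μ : Measure Ω) (f g : Ω → ℝ) : ℝ :=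
  ∫ ω, f ω * g ω ∂μ - (∫ ω, f ω ∂μ) * (∫ ω, g ω ∂μ)

/-!
Write `(X, Y) = Z + V` with `Z = (X*, ⟨β, X*⟩)` and `V = (U, ε)`, which are independent, so that
`φ_{(X,Y)} = φ_Z · φ_V`. Since `Λ` is the Hessian of `log φ`, it is additive over this product. The
off-diagonal entries of `Λ[φ_V]` vanish because the coordinates of `V` are independent, and
`Λ_{k₁k₂}[φ_Z](s) = Λ_{k₁k₂}[φ_{X*}](A s)` with `A s = (s_k + s_{K+1} β_k)_k`, which maps
`s(b, u)` to `u (b - β)`. Finally `Cov(Z_j, Z_k) = -Λ_{jk}[φ_Z](0)`, so the same identity at `s = 0`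
relates the two covariances.
-/

section Calculus

variable {d : ℕ} {φ ψ : (Fin d → ℝ) → ℂ} {s : Fin d → ℝ}

lemma pd_add (j : Fin d) (hφ : DifferentiableAt ℝ φ s) (hψ : DifferentiableAt ℝ ψ s) :
    pd j (φ + ψ) s = pd j φ s + pd j ψ s := by
  simp [pd, fderiv_add hφ hψ]

lemma pd_mul (j : Fin d) (hφ : DifferentiableAt ℝ φ s) (hψ : DifferentiableAt ℝ ψ s) :
    pd j (φ * ψ) s = pd j φ s * ψ s + φ s * pd j ψ s := by
  simp [pd, fderiv_mul hφ hψ]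
  ring

lemma differentiable_pd (k : Fin d) (hφ : ContDiff ℝ 2 φ) : Differentiable ℝ (pd k φ) :=
  fun s => ((hφ.fderiv_right (m := 1) (by norm_num)).differentiable (by norm_num) s).clm_apply
    (differentiableAt_const _)

lemma pd_pd_eq_iteratedFDeriv (j k : Fin d) (hφ : ContDiff ℝ 2 φ) :
    pd j (pd k φ) s = iteratedFDeriv ℝ 2 φ s ![Pi.single j 1, Pi.single k 1] := by
  rw [iteratedFDeriv_two_apply, pd, show pd k φ = fun t => fderiv ℝ φ t (Pi.single k 1) from rfl,
    fderiv_clm_apply ((hφ.fderiv_right (m := 1) (by norm_num)).differentiable (by norm_num) s)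
      (differentiableAt_const _)]
  simp

theorem Lam_mul (j k : Fin d) (hφ : ContDiff ℝ 2 φ) (hψ : ContDiff ℝ 2 ψ) (hφs : φ s ≠ 0)
    (hψs : ψ s ≠ 0) : Lam j k (φ * ψ) s = Lam j k φ s + Lam j k ψ s := by
  have hφ1 := hφ.differentiable (by norm_num)
  have hψ1 := hψ.differentiable (by norm_num)
  have hprod : pd k (φ * ψ) = pd k φ * ψ + φ * pd k ψ :=
    funext fun t => pd_mul k (hφ1 t) (hψ1 t)
  simp only [Lam, hprod]
  rw [pd_add j ((differentiable_pd k hφ).mul hψ1 s) (hφ1.mul (differentiable_pd k hψ) s),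
    pd_mul j (differentiable_pd k hφ s) (hψ1 s), pd_mul j (hφ1 s) (differentiable_pd k hψ s),
    pd_mul j (hφ1 s) (hψ1 s)]
  simp only [Pi.mul_apply, Pi.add_apply]
  field_simp
  ring

end Calculus

section CharF

variable {Ω : Type*} [MeasurableSpace Ω] {μ : Measure Ω} {d : ℕ} {Z : Ω → Fin d → ℝ}

-- Mathlib's `charFun` lives on inner product spaces, while `Fin d → ℝ` carries the sup norm.
noncomputable abbrev toEuclideanSpace (d : ℕ) : (Fin d → ℝ) →L[ℝ] EuclideanSpace ℝ (Fin d) :=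
  (EuclideanSpace.equiv (Fin d) ℝ).symm.toContinuousLinearMap

lemma charF_eq_charFun_comp (hZ : AEMeasurable Z μ) :
    charF μ Z = charFun (μ.map (toEuclideanSpace d ∘ Z)) ∘ toEuclideanSpace d := by
  ext s
  rw [Function.comp_apply, charFun_apply, integral_map (by fun_prop) (by fun_prop), charF]
  congr with ω
  simp [PiLp.inner_apply, mul_comm]

lemma memLp_id_map_toEuclideanSpace {n : ℕ} (hZ : ∀ k, MemLp (fun ω => Z ω k) n μ) :
    MemLp id n (μ.map (toEuclideanSpace d ∘ Z)) := by
  have hZm : AEMeasurable Z μ := (MemLp.of_eval hZ).aestronglyMeasurable.aemeasurable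
  refine (memLp_map_measure_iff aestronglyMeasurable_id (by fun_prop)).2 (MemLp.of_eval_piLp ?_)
  simpa using hZ

theorem charF_add {V : Ω → Fin d → ℝ} (hZ : AEMeasurable Z μ) (hV : AEMeasurable V μ)
    (hZV : IndepFun Z V μ) : charF μ (Z + V) = charF μ Z * charF μ V := by
  ext s
  simp only [charF, Pi.add_apply, mul_add, Finset.sum_add_distrib, Complex.ofReal_add,
    Complex.exp_add]
  have hexp : Continuous fun z : Fin d → ℝ =>
      Complex.exp (Complex.I * ((∑ k, s k * z k : ℝ) : ℂ)) := by
    fun_prop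
  exact hZV.integral_fun_comp_mul_comp hZ hV hexp.aestronglyMeasurable hexp.aestronglyMeasurable

lemma ProbabilityTheory.iIndepFun.indepFun_indicator {ι β : Type*} [MeasurableSpace β] [Zero β]
    {V : ι → Ω → β}
    (hV : iIndepFun V μ) (hm : ∀ i, AEMeasurable (V i) μ) {S T : Finset ι} (hST : Disjoint S T) :
    IndepFun (fun ω => (S : Set ι).indicator fun i => V i ω)
      (fun ω => (T : Set ι).indicator fun i => V i ω) μ := by
  classical
  have := (hV.indepFun_finset₀ S T hST hm).comp
    (φ := fun y i => if h : i ∈ S then y ⟨i, h⟩ else 0)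
    (ψ := fun y i => if h : i ∈ T then y ⟨i, h⟩ else 0)
    (measurable_pi_lambda _ fun i => by by_cases h : i ∈ S <;> simp [h, measurable_pi_apply])
    (measurable_pi_lambda _ fun i => by by_cases h : i ∈ T <;> simp [h, measurable_pi_apply])
  convert this using 1 <;> ext ω i <;> simp [Set.indicator]

lemma memLp_snoc_sum {p : ENNReal} (hZ : ∀ k, MemLp (fun ω => Z ω k) p μ) (β : Fin d → ℝ) :
    ∀ i, MemLp (fun ω => (Fin.snoc (Z ω) (∑ k, β k * Z ω k) : Fin (d + 1) → ℝ) i) p μ :=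
  Fin.lastCases (by simpa using memLp_finsetSum _ fun k _ => (hZ k).const_mul (β k))
    fun k => by simpa using hZ k

section Finite

variable [IsFiniteMeasure μ]

theorem contDiff_charF {n : ℕ} (hZ : ∀ k, MemLp (fun ω => Z ω k) n μ) :
    ContDiff ℝ n (charF μ Z) := by
  rw [charF_eq_charFun_comp (MemLp.of_eval hZ).aestronglyMeasurable.aemeasurable]
  exact (contDiff_charFun (memLp_id_map_toEuclideanSpace hZ)).comp
    (toEuclideanSpace d).contDiff

theorem iteratedFDeriv_charF {n : ℕ} (hZ : ∀ k, MemLp (fun ω => Z ω k) n μ) (s : Fin d → ℝ)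
    (v : Fin n → Fin d → ℝ) :
    iteratedFDeriv ℝ n (charF μ Z) s v = Complex.I ^ n * ∫ ω, ((∏ i, ∑ k, v i k * Z ω k : ℝ) : ℂ)
      * Complex.exp (Complex.I * ((∑ k, s k * Z ω k : ℝ) : ℂ)) ∂μ := by
  have hZm : AEMeasurable Z μ := (MemLp.of_eval hZ).aestronglyMeasurable.aemeasurable
  have hmap := memLp_id_map_toEuclideanSpace hZ
  rw [charF_eq_charFun_comp hZm, (toEuclideanSpace d).iteratedFDeriv_comp_right
    (contDiff_charFun hmap) s le_rfl, ContinuousMultilinearMap.compContinuousLinearMap_apply,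
    iteratedFDeriv_charFun hmap, integral_map (by fun_prop) (by fun_prop)]
  congr 2 with ω
  simp [PiLp.inner_apply, mul_comm]

lemma pd_charF (hZ : ∀ k, Integrable (fun ω => Z ω k) μ) (j : Fin d) (s : Fin d → ℝ) :
    pd j (charF μ Z) s = Complex.I * ∫ ω, (Z ω j : ℂ)
      * Complex.exp (Complex.I * ((∑ k, s k * Z ω k : ℝ) : ℂ)) ∂μ := by
  have h := iteratedFDeriv_charF (μ := μ) (Z := Z) (n := 1)
    (fun k => by exact_mod_cast memLp_one_iff_integrable.2 (hZ k)) s ![Pi.single j 1]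
  rw [iteratedFDeriv_one_apply] at h
  rw [pd]
  simpa [Pi.single_apply] using h

lemma pd_pd_charF (hZ : ∀ k, MemLp (fun ω => Z ω k) 2 μ) (j k : Fin d) (s : Fin d → ℝ) :
    pd j (pd k (charF μ Z)) s = -∫ ω, (Z ω j : ℂ) * Z ω k
      * Complex.exp (Complex.I * ((∑ i, s i * Z ω i : ℝ) : ℂ)) ∂μ := by
  rw [pd_pd_eq_iteratedFDeriv j k (contDiff_charF hZ), iteratedFDeriv_charF hZ]
  simp [Pi.single_apply]

theorem Lam_charF_congr {d' : ℕ} {Z' : Ω → Fin d' → ℝ}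
    (hZ : ∀ k, MemLp (fun ω => Z ω k) 2 μ) (hZ' : ∀ k, MemLp (fun ω => Z' ω k) 2 μ)
    {j k : Fin d} {j' k' : Fin d'} {s : Fin d → ℝ} {s' : Fin d' → ℝ}
    (hj : ∀ ω, Z ω j = Z' ω j') (hk : ∀ ω, Z ω k = Z' ω k')
    (hs : ∀ ω, ∑ i, s i * Z ω i = ∑ i, s' i * Z' ω i) :
    Lam j k (charF μ Z) s = Lam j' k' (charF μ Z') s' := by
  have hZ1 : ∀ k, Integrable (fun ω => Z ω k) μ := fun k => (hZ k).integrable one_le_two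
  have hZ1' : ∀ k, Integrable (fun ω => Z' ω k) μ := fun k => (hZ' k).integrable one_le_two
  simp only [Lam, pd_pd_charF hZ, pd_pd_charF hZ', pd_charF hZ1, pd_charF hZ1', charF, hj, hk, hs]

theorem Lam_charF_eq_zero (hZ : ∀ k, MemLp (fun ω => Z ω k) 2 μ) {j k : Fin d}
    (h : (∀ ω, Z ω j = 0) ∨ ∀ ω, Z ω k = 0) (s : Fin d → ℝ) : Lam j k (charF μ Z) s = 0 := by
  have hZ1 : ∀ k, Integrable (fun ω => Z ω k) μ := fun k => (hZ k).integrable one_le_two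
  rcases h with h | h <;> simp [Lam, pd_pd_charF hZ, pd_charF hZ1, h]

theorem Lam_charF_add {V : Ω → Fin d → ℝ} (hZ : ∀ k, MemLp (fun ω => Z ω k) 2 μ)
    (hV : ∀ k, MemLp (fun ω => V ω k) 2 μ) (hZV : IndepFun Z V μ) (j k : Fin d) {s : Fin d → ℝ}
    (hne : charF μ (Z + V) s ≠ 0) :
    Lam j k (charF μ (Z + V)) s = Lam j k (charF μ Z) s + Lam j k (charF μ V) s := by
  rw [charF_add (MemLp.of_eval hZ).aestronglyMeasurable.aemeasurable
    (MemLp.of_eval hV).aestronglyMeasurable.aemeasurable hZV] at hne ⊢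
  exact Lam_mul j k (contDiff_charF hZ) (contDiff_charF hV) (left_ne_zero_of_mul hne)
    (right_ne_zero_of_mul hne)

-- `V` is the sum of its `j`-th coordinate and the others, two independent vectors each of which
-- vanishes in coordinate `k` or `j`.
theorem Lam_charF_eq_zero_of_iIndepFun {V : Fin d → Ω → ℝ} (hV : iIndepFun V μ)
    (hL2 : ∀ i, MemLp (V i) 2 μ) {j k : Fin d} (hjk : j ≠ k) (s : Fin d → ℝ) :
    Lam j k (charF μ fun ω i => V i ω) s = 0 := by
  classical
  by_cases hne : charF μ (fun ω i => V i ω) s = 0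
  · simp [Lam, hne]
  set A : Ω → Fin d → ℝ := fun ω => (({j} : Finset (Fin d)) : Set (Fin d)).indicator fun i => V i ω
  set B : Ω → Fin d → ℝ := fun ω => (({j}ᶜ : Finset (Fin d)) : Set (Fin d)).indicator fun i => V i ω
  have hAB : (fun ω i => V i ω) = A + B := by
    ext ω i
    simp only [A, B, Pi.add_apply, Finset.coe_compl, Set.indicator_self_add_compl_apply]
  have hA : ∀ i, MemLp (fun ω => A ω i) 2 μ := fun i => by
    by_cases h : i = j <;> simp [A, h, hL2]
  have hB : ∀ i, MemLp (fun ω => B ω i) 2 μ := fun i => by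
    by_cases h : i = j <;> simp [B, h, hL2]
  have hind : IndepFun A B μ := hV.indepFun_indicator
    (fun i => (hL2 i).aestronglyMeasurable.aemeasurable) disjoint_compl_right
  rw [hAB] at hne ⊢
  rw [Lam_charF_add hA hB hind j k hne, Lam_charF_eq_zero hA (.inr fun ω => by simp [A, hjk.symm]),
    Lam_charF_eq_zero hB (.inl fun ω => by simp [B]), add_zero]

theorem Lam_charF_snoc_sum (hZ : ∀ k, MemLp (fun ω => Z ω k) 2 μ) (β : Fin d → ℝ)
    (j k : Fin d) (s : Fin (d + 1) → ℝ) :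
    Lam (Fin.castSucc j) (Fin.castSucc k)
        (charF μ fun ω => Fin.snoc (Z ω) (∑ i, β i * Z ω i)) s
      = Lam j k (charF μ Z) fun i => s (Fin.castSucc i) + s (Fin.last d) * β i :=
  Lam_charF_congr (memLp_snoc_sum hZ β) hZ (fun ω => by simp) (fun ω => by simp) fun ω => by
    simp [Fin.sum_univ_castSucc, add_mul, Finset.sum_add_distrib, Finset.mul_sum, mul_assoc]

end Finite

lemma charF_zero [IsProbabilityMeasure μ] (Z : Ω → Fin d → ℝ) : charF μ Z 0 = 1 := by
  simp [charF]

theorem cov_eq_neg_Lam_charF_zero [IsProbabilityMeasure μ]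
    (hZ : ∀ k, MemLp (fun ω => Z ω k) 2 μ) (j k : Fin d) :
    (cov μ (fun ω => Z ω j) (fun ω => Z ω k) : ℂ) = -Lam j k (charF μ Z) 0 := by
  have hZ1 : ∀ k, Integrable (fun ω => Z ω k) μ := fun k => (hZ k).integrable one_le_two
  rw [Lam, pd_pd_charF hZ, pd_charF hZ1, pd_charF hZ1, charF_zero, cov]
  simp only [Pi.zero_apply, zero_mul, Finset.sum_const_zero, Complex.ofReal_zero, mul_zero,
    Complex.exp_zero, mul_one, one_pow, div_one, ← Complex.ofReal_mul, integral_complex_ofReal]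
  push_cast
  linear_combination (-↑(∫ ω, Z ω j ∂μ) * ↑(∫ ω, Z ω k ∂μ) : ℂ) * Complex.I_mul_I

end CharF

lemma Measurable.fin_snoc {α β : Type*} [MeasurableSpace α] [MeasurableSpace β] {n : ℕ}
    {f : α → Fin n → β} {g : α → β} (hf : Measurable f) (hg : Measurable g) :
    Measurable fun a => (Fin.snoc (f a) (g a) : Fin (n + 1) → β) :=
  measurable_pi_lambda _ fun i =>
    Fin.lastCases (by simpa using hg) (fun k => by simpa using measurable_pi_iff.1 hf k) i

theorem stmt3_general {Ω : Type*} [MeasurableSpace Ω] (μ : Measure Ω) [IsProbabilityMeasure μ]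
    (K : ℕ) (Xstar : Ω → Fin K → ℝ) (U : Fin K → Ω → ℝ) (eps : Ω → ℝ) (β : Fin K → ℝ)
    (X : Fin K → Ω → ℝ) (Y : Ω → ℝ)
    (hX : ∀ k ω, X k ω = Xstar ω k + U k ω)
    (hY : ∀ ω, Y ω = ∑ k, β k * Xstar ω k + eps ω)
    (hIndep1 : iIndepFun ((Fin.snoc U eps : Fin (K+1) → Ω → ℝ)) μ)
    (hIndep2 : IndepFun (fun ω => (fun k => U k ω, eps ω)) Xstar μ)
    (hL2X : ∀ k, MemLp (fun ω => Xstar ω k) 2 μ)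
    (hL2U : ∀ k, MemLp (U k) 2 μ) (hL2e : MemLp eps 2 μ)
    (b : Fin K → ℝ) (u : ℝ)
    (hne : charF μ (fun ω => Fin.snoc (fun k => X k ω) (Y ω))
      (Fin.snoc (fun k => b k * u) (-u)) ≠ 0)
    (k1 k2 : Fin K) (hk : k1 ≠ k2) :
    (cov μ (X k1) (X k2) : ℂ)
        + Lam (Fin.castSucc k1) (Fin.castSucc k2)
            (charF μ (fun ω => Fin.snoc (fun k => X k ω) (Y ω)))
            (Fin.snoc (fun k => b k * u) (-u))
      = (cov μ (fun ω => Xstar ω k1) (fun ω => Xstar ω k2) : ℂ)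
          + Lam k1 k2 (charF μ Xstar) (fun k => u * (b k - β k)) := by
  set W : Ω → Fin (K + 1) → ℝ := fun ω => Fin.snoc (fun k => X k ω) (Y ω)
  set Z : Ω → Fin (K + 1) → ℝ := fun ω => Fin.snoc (Xstar ω) (∑ k, β k * Xstar ω k)
  set V : Ω → Fin (K + 1) → ℝ := fun ω i => (Fin.snoc U eps : Fin (K + 1) → Ω → ℝ) i ω
  have hWZV : W = Z + V := by
    ext ω i
    refine Fin.lastCases ?_ (fun k => ?_) i <;> simp [W, Z, V, hX, hY]
  have hL2V : ∀ i, MemLp ((Fin.snoc U eps : Fin (K + 1) → Ω → ℝ) i) 2 μ :=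
    Fin.lastCases (by simpa using hL2e) fun k => by simpa using hL2U k
  have hL2W : ∀ i, MemLp (fun ω => W ω i) 2 μ := fun i => by
    rw [hWZV]; exact (memLp_snoc_sum hL2X β i).add (hL2V i)
  have hZV : IndepFun Z V μ := by
    have := hIndep2.symm.comp (φ := fun x => (Fin.snoc x (∑ k, β k * x k) : Fin (K + 1) → ℝ))
      (ψ := fun p : (Fin K → ℝ) × ℝ => (Fin.snoc p.1 p.2 : Fin (K + 1) → ℝ))
      (measurable_id.fin_snoc (by fun_prop)) (measurable_fst.fin_snoc measurable_snd)
    convert this using 1 <;> ext ω i <;> refine Fin.lastCases ?_ (fun k => ?_) i <;> simp [Z, V]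
  have hΛ : ∀ s, charF μ W s ≠ 0 → Lam (Fin.castSucc k1) (Fin.castSucc k2) (charF μ W) s
      = Lam k1 k2 (charF μ Xstar) fun k => s (Fin.castSucc k) + s (Fin.last K) * β k := by
    intro s hs
    rw [hWZV] at hs ⊢
    rw [Lam_charF_add (memLp_snoc_sum hL2X β) hL2V hZV _ _ hs,
      Lam_charF_eq_zero_of_iIndepFun hIndep1 hL2V (by simpa using hk), add_zero,
      Lam_charF_snoc_sum hL2X]
  have hcovW :
      (cov μ (X k1) (X k2) : ℂ) = -Lam (Fin.castSucc k1) (Fin.castSucc k2) (charF μ W) 0 := by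
    simpa [W] using cov_eq_neg_Lam_charF_zero hL2W (Fin.castSucc k1) (Fin.castSucc k2)
  rw [hcovW, hΛ 0 (by simp [charF_zero]), hΛ _ hne, cov_eq_neg_Lam_charF_zero hL2X]
  congr 3 <;> ext k <;> simp
  ring

/-- for `k₁ ≠ k₂`,
`Cov(X_{k₁},X_{k₂}) + Λ_{k₁,k₂}[φ_{(X,Y)}](b₁u,…,b_Ku,−u)`
`= Cov(X*_{k₁},X*_{k₂}) + Λ_{k₁,k₂}[φ_{X*}](u(b₁−β₁),…,u(b_K−β_K))`. -/
theorem stmt3 {Ω : Type*} [MeasurableSpace Ω] (μ : Measure Ω) [IsProbabilityMeasure μ]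
    (K : ℕ) (Xstar : Ω → Fin K → ℝ) (U : Fin K → Ω → ℝ) (eps : Ω → ℝ) (β : Fin K → ℝ)
    (X : Fin K → Ω → ℝ) (Y : Ω → ℝ)
    (hXm : Measurable Xstar) (hUm : ∀ k, Measurable (U k)) (hem : Measurable eps)
    (hX : ∀ k ω, X k ω = Xstar ω k + U k ω)
    (hY : ∀ ω, Y ω = ∑ k, β k * Xstar ω k + eps ω)
    (hIndep1 : iIndepFun ((Fin.snoc U eps : Fin (K+1) → Ω → ℝ)) μ)
    (hIndep2 : IndepFun (fun ω => (fun k => U k ω, eps ω)) Xstar μ)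
    (hL2X : ∀ k, MemLp (fun ω => Xstar ω k) 2 μ)
    (hL2U : ∀ k, MemLp (U k) 2 μ) (hL2e : MemLp eps 2 μ)
    (b : Fin K → ℝ) (u : ℝ)
    (hne : charF μ (fun ω => Fin.snoc (fun k => X k ω) (Y ω))
      (Fin.snoc (fun k => b k * u) (-u)) ≠ 0)
    (k1 k2 : Fin K) (hk : k1 ≠ k2) :
    (cov μ (X k1) (X k2) : ℂ)
        + Lam (Fin.castSucc k1) (Fin.castSucc k2)
            (charF μ (fun ω => Fin.snoc (fun k => X k ω) (Y ω)))
            (Fin.snoc (fun k => b k * u) (-u))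
      = (cov μ (fun ω => Xstar ω k1) (fun ω => Xstar ω k2) : ℂ)
          + Lam k1 k2 (charF μ Xstar) (fun k => u * (b k - β k)) :=
  stmt3_general μ K Xstar U eps β X Y hX hY hIndep1 hIndep2 hL2X hL2U hL2e b u hne k1 k2 hk
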